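/- arXiv:2407.10561 — 2 statements merged into one kernel-verified Lean document; each statement's English description precedes it below -/
import Mathlib

section
/- Fix T > 0, parameters a > 𝔭 𝔥 T with 𝔥, 𝔭 ≥ 0, φ with 2φ − 𝔥 ≥ 0, and r ≥ 0. For ν ∈ L²([0,T]) define Q^ν_t = q₀ + ∫₀ᵗ (ν_s − w_s) ds (w fixed and square-integrable), Y^ν_t = e^{−𝔭 t} Y_0 + 𝔥 ∫₀ᵗ e^{−𝔭(t−s)} ν_s ds, and J(ν) = ∫₀ᵀ [−a ν_t² + Q^ν_t (c_t + 𝔥 ν_t − 𝔭 Y^ν_t − 2φ(ν_t − w_t) − r Q^ν_t)] dt, with c fixed and integrable. Then J is strictly concave on L²([0,T]). -/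
open MeasureTheory intervalIntegral Real
open Set
open scoped Interval

/-!
Write `δ = ν - ζ`, `G t = ∫₀ᵗ δ` and `K t = ∫₀ᵗ e^{-𝔭(t-s)} δ s ds`. The integrand of `J` is a
quadratic polynomial in `(ν_t, Q^ν_t, Y^ν_t)`, and these depend affinely on `ν`, with
`Q^ν - Q^ζ = G` and `Y^ν - Y^ζ = 𝔥 K`. Hence the concavity defect
`J(ρν + (1-ρ)ζ) - ρ J ν - (1-ρ) J ζ` equals
`ρ(1-ρ) ∫₀ᵀ (a δ² + (2φ-𝔥) G δ + 𝔭𝔥 G K + r G²)`.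
Here `∫₀ᵀ G δ = G(T)²/2 ≥ 0`, and the exponential-kernel term is nonnegative as well: integrating
by parts gives `G = K + 𝔭 ∫₀ᵗ K`, so `∫₀ᵀ G K = ∫₀ᵀ K² + 𝔭 (∫₀ᵀ K)²/2`.
The defect is therefore at least `ρ(1-ρ) a ∫₀ᵀ δ² > 0`.
-/

theorem IntervalIntegrable.memLp_two_iff_sq {f : ℝ → ℝ} {a b : ℝ}
    (hf : IntervalIntegrable f volume a b) :
    MemLp f 2 (volume.restrict (Ι a b)) ↔ IntervalIntegrable (fun x => f x ^ 2) volume a b := by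
  rw [intervalIntegrable_iff]
  exact memLp_two_iff_integrable_sq hf.def'.aestronglyMeasurable

theorem integral_sq_sub_pos {f g : ℝ → ℝ} {a b : ℝ}
    (hfg : IntervalIntegrable (fun x => (f x - g x) ^ 2) volume a b)
    (hne : 0 < volume {x ∈ Icc a b | f x ≠ g x}) :
    0 < ∫ x in a..b, (f x - g x) ^ 2 := by
  have hsupp : Function.support (fun x => (f x - g x) ^ 2) = {x | f x ≠ g x} := by
    ext x; simp [sub_eq_zero]
  have hab : a < b := by
    have := hne.trans_le (measure_mono (fun x hx => hx.1))
    rwa [Real.volume_Icc, ENNReal.ofReal_pos, sub_pos] at this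
  rw [integral_pos_iff_support_of_nonneg_ae' (ae_of_all _ fun x => sq_nonneg _) hfg, hsupp,
    measure_congr ((ae_eq_refl _).inter Ioc_ae_eq_Icc)]
  exact ⟨hab, hne.trans_le (measure_mono fun x hx => ⟨hx.2, hx.1⟩)⟩

theorem integral_convexComb {f g : ℝ → ℝ} {a b : ℝ} (hf : IntervalIntegrable f volume a b)
    (hg : IntervalIntegrable g volume a b) (ρ : ℝ) :
    ∫ x in a..b, (ρ * f x + (1 - ρ) * g x)
      = ρ * (∫ x in a..b, f x) + (1 - ρ) * ∫ x in a..b, g x := by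
  rw [integral_add (hf.const_mul ρ) (hg.const_mul _), intervalIntegral.integral_const_mul,
    intervalIntegral.integral_const_mul]

theorem integral_primitive_mul_self {f : ℝ → ℝ} {a b : ℝ} (hf : IntervalIntegrable f volume a b) :
    ∫ x in a..b, (∫ t in a..x, f t) * f x = (∫ t in a..b, f t) ^ 2 / 2 := by
  set G := fun x => ∫ t in a..x, f t
  have hG := hf.absolutelyContinuousOnInterval_intervalIntegral (c := a) left_mem_uIcc
  have hderiv : ∀ᵐ x, x ∈ Ι a b → deriv G x * G x + G x * deriv G x = 2 * (G x * f x) := by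
    filter_upwards [hf.ae_hasDerivAt_integral] with x hx hxI
    rw [(hx (uIoc_subset_uIcc hxI) a left_mem_uIcc).deriv]
    ring
  have h := hG.integral_deriv_mul_eq_sub hG
  rw [integral_congr_ae hderiv, intervalIntegral.integral_const_mul] at h
  simp only [G, integral_same, mul_zero, sub_zero] at h
  linarith

noncomputable def discountedPrimitive (p : ℝ) (f : ℝ → ℝ) (t : ℝ) : ℝ :=
  ∫ s in (0:ℝ)..t, exp (-p * (t - s)) * f s

theorem discountedPrimitive_eq (p : ℝ) (f : ℝ → ℝ) (t : ℝ) :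
    discountedPrimitive p f t = exp (-p * t) * ∫ s in (0:ℝ)..t, exp (p * s) * f s := by
  rw [discountedPrimitive, ← intervalIntegral.integral_const_mul]
  congr 1 with s
  rw [← mul_assoc, ← exp_add]
  ring_nf

theorem discountedPrimitive_convexComb {p t : ℝ} {ν ζ : ℝ → ℝ}
    (hν : IntervalIntegrable ν volume 0 t) (hζ : IntervalIntegrable ζ volume 0 t) (ρ : ℝ) :
    discountedPrimitive p (fun s => ρ * ν s + (1 - ρ) * ζ s) t
      = ρ * discountedPrimitive p ν t + (1 - ρ) * discountedPrimitive p ζ t := by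
  have hk : ContinuousOn (fun s => exp (-p * (t - s))) (uIcc 0 t) := by fun_prop
  simp only [discountedPrimitive]
  rw [← integral_convexComb (hν.continuousOn_mul hk) (hζ.continuousOn_mul hk)]
  congr 1 with s
  ring

theorem discountedPrimitive_sub {p t : ℝ} {ν ζ : ℝ → ℝ}
    (hν : IntervalIntegrable ν volume 0 t) (hζ : IntervalIntegrable ζ volume 0 t) :
    discountedPrimitive p ν t - discountedPrimitive p ζ t
      = discountedPrimitive p (fun s => ν s - ζ s) t := by
  have hk : ContinuousOn (fun s => exp (-p * (t - s))) (uIcc 0 t) := by fun_prop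
  rw [discountedPrimitive, discountedPrimitive, ← integral_sub (hν.continuousOn_mul hk)
    (hζ.continuousOn_mul hk)]
  congr 1 with s
  ring

theorem continuousOn_discountedPrimitive {p T : ℝ} {f : ℝ → ℝ}
    (hf : IntervalIntegrable f volume 0 T) :
    ContinuousOn (discountedPrimitive p f) (uIcc 0 T) := by
  simp only [funext (discountedPrimitive_eq p f)]
  exact (continuous_exp.comp (continuous_const_mul _)).continuousOn.mul
    (continuousOn_primitive_interval'
      (hf.continuousOn_mul (continuous_exp.comp (continuous_const_mul p)).continuousOn)
      left_mem_uIcc)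

/-- Integrate `e^{-ps} · d(∫₀ˢ e^{pu} f u du)` by parts. -/
theorem primitive_eq_discountedPrimitive_add {p t : ℝ} {f : ℝ → ℝ}
    (hf : IntervalIntegrable f volume 0 t) :
    ∫ s in (0:ℝ)..t, f s
      = discountedPrimitive p f t + p * ∫ s in (0:ℝ)..t, discountedPrimitive p f s := by
  set P := fun s => ∫ u in (0:ℝ)..s, exp (p * u) * f u
  have hPf : IntervalIntegrable (fun u => exp (p * u) * f u) volume 0 t :=
    hf.continuousOn_mul (continuous_exp.comp (continuous_const_mul p)).continuousOn
  have hP : AbsolutelyContinuousOnInterval P 0 t :=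
    hPf.absolutelyContinuousOnInterval_intervalIntegral left_mem_uIcc
  have hE : AbsolutelyContinuousOnInterval (fun s => exp (-p * s)) 0 t :=
    (contDiff_exp.comp (contDiff_const.mul contDiff_id)).contDiffOn.absolutelyContinuousOnInterval
  have hEP : ∀ᵐ s, s ∈ Ι (0:ℝ) t → exp (-p * s) * deriv P s = f s := by
    filter_upwards [hPf.ae_hasDerivAt_integral] with s hs hsI
    rw [(hs (uIoc_subset_uIcc hsI) 0 left_mem_uIcc).deriv, ← mul_assoc, ← exp_add]
    simp
  have hE' : ∀ s, deriv (fun s => exp (-p * s)) s * P s = -p * discountedPrimitive p f s := by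
    intro s
    have hd : HasDerivAt (fun s => exp (-p * s)) (exp (-p * s) * (-p * 1)) s :=
      ((hasDerivAt_id s).const_mul (-p)).exp
    rw [hd.deriv, discountedPrimitive_eq]
    ring
  have h := hE.integral_mul_deriv_eq_deriv_mul hP
  rw [integral_congr_ae hEP] at h
  simp only [hE', intervalIntegral.integral_const_mul, P, integral_same, mul_zero, sub_zero] at h
  rw [h, discountedPrimitive_eq]
  ring

theorem integral_primitive_mul_discountedPrimitive_nonneg {p T : ℝ} {f : ℝ → ℝ}
    (hT : 0 ≤ T) (hp : 0 ≤ p) (hf : IntervalIntegrable f volume 0 T) :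
    0 ≤ ∫ t in (0:ℝ)..T, (∫ s in (0:ℝ)..t, f s) * discountedPrimitive p f t := by
  set K := discountedPrimitive p f
  have hK : ContinuousOn K (uIcc 0 T) := continuousOn_discountedPrimitive hf
  have hKi : IntervalIntegrable K volume 0 T := hK.intervalIntegrable
  have hsplit : EqOn (fun t => (∫ s in (0:ℝ)..t, f s) * K t)
      (fun t => K t ^ 2 + p * ((∫ s in (0:ℝ)..t, K s) * K t)) (uIcc 0 T) := by
    intro t ht
    simp only
    rw [primitive_eq_discountedPrimitive_add (hf.mono_set (uIcc_subset_uIcc left_mem_uIcc ht))]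
    ring
  have hHK : IntervalIntegrable (fun t => (∫ s in (0:ℝ)..t, K s) * K t) volume 0 T :=
    ((continuousOn_primitive_interval' hKi left_mem_uIcc).mul hK).intervalIntegrable
  rw [integral_congr hsplit,
    integral_add (hK.pow 2).intervalIntegrable (f := fun t => K t ^ 2) (hHK.const_mul p),
    intervalIntegral.integral_const_mul, integral_primitive_mul_self hKi]
  have := integral_nonneg (μ := volume) hT fun t _ => sq_nonneg (K t)
  positivity

/-- With `f = ν - ζ` this is the integrand of the concavity defect of the broker's functional:
`∫₀ᵗ f` is `Q^ν - Q^ζ` and `𝔥 * discountedPrimitive 𝔭 f` is `Y^ν - Y^ζ`. -/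
noncomputable def concavityDefect (a b c p r : ℝ) (f : ℝ → ℝ) (t : ℝ) : ℝ :=
  a * f t ^ 2 + b * ((∫ s in (0:ℝ)..t, f s) * f t)
    + c * ((∫ s in (0:ℝ)..t, f s) * discountedPrimitive p f t) + r * (∫ s in (0:ℝ)..t, f s) ^ 2

theorem integral_concavityDefect_pos {a b c p r T : ℝ} {f : ℝ → ℝ} (hT : 0 ≤ T) (ha : 0 < a)
    (hb : 0 ≤ b) (hc : 0 ≤ c) (hp : 0 ≤ p) (hr : 0 ≤ r) (hf : IntervalIntegrable f volume 0 T)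
    (hf2 : IntervalIntegrable (fun t => f t ^ 2) volume 0 T)
    (hpos : 0 < ∫ t in (0:ℝ)..T, f t ^ 2) :
    0 < ∫ t in (0:ℝ)..T, concavityDefect a b c p r f t := by
  have hF : ContinuousOn (fun t => ∫ s in (0:ℝ)..t, f s) (uIcc 0 T) :=
    continuousOn_primitive_interval' hf left_mem_uIcc
  have hK : ContinuousOn (discountedPrimitive p f) (uIcc 0 T) := continuousOn_discountedPrimitive hf
  have h₁ : IntervalIntegrable (fun t => a * f t ^ 2) volume 0 T := hf2.const_mul a
  have h₂ : IntervalIntegrable (fun t => b * ((∫ s in (0:ℝ)..t, f s) * f t)) volume 0 T :=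
    (hf.continuousOn_mul hF).const_mul b
  have h₃ : IntervalIntegrable
      (fun t => c * ((∫ s in (0:ℝ)..t, f s) * discountedPrimitive p f t)) volume 0 T :=
    (hF.mul hK).intervalIntegrable.const_mul c
  have h₄ : IntervalIntegrable (fun t => r * (∫ s in (0:ℝ)..t, f s) ^ 2) volume 0 T :=
    (hF.pow 2).intervalIntegrable.const_mul r
  simp only [concavityDefect]
  rw [integral_add ((h₁.add h₂).add h₃) h₄, integral_add (h₁.add h₂) h₃, integral_add h₁ h₂]
  simp only [intervalIntegral.integral_const_mul, integral_primitive_mul_self hf]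
  have := mul_pos ha hpos
  have := mul_nonneg hc (integral_primitive_mul_discountedPrimitive_nonneg hT hp hf)
  have := mul_nonneg hr
    (integral_nonneg (μ := volume) hT fun t _ => sq_nonneg (∫ s in (0:ℝ)..t, f s))
  have := mul_nonneg hb (sq_nonneg (∫ s in (0:ℝ)..T, f s))
  linarith

/-- The integrand of the broker's functional at `ν_t = x`, `Q^ν_t = q`, `Y^ν_t = y`. -/
def runningReward (a 𝔥 𝔭 φ r c w x q y : ℝ) : ℝ :=
  -a * x ^ 2 + q * (c + 𝔥 * x - 𝔭 * y - 2 * φ * (x - w) - r * q)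

theorem runningReward_convexComb_sub (a 𝔥 𝔭 φ r c w ρ x₁ x₂ q₁ q₂ y₁ y₂ : ℝ) :
    runningReward a 𝔥 𝔭 φ r c w (ρ * x₁ + (1 - ρ) * x₂) (ρ * q₁ + (1 - ρ) * q₂)
        (ρ * y₁ + (1 - ρ) * y₂)
      - (ρ * runningReward a 𝔥 𝔭 φ r c w x₁ q₁ y₁ + (1 - ρ) * runningReward a 𝔥 𝔭 φ r c w x₂ q₂ y₂)
      = ρ * (1 - ρ) * (a * (x₁ - x₂) ^ 2 + (2 * φ - 𝔥) * ((q₁ - q₂) * (x₁ - x₂))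
          + 𝔭 * ((q₁ - q₂) * (y₁ - y₂)) + r * (q₁ - q₂) ^ 2) := by
  simp only [runningReward]
  ring

theorem intervalIntegrable_runningReward {a 𝔥 𝔭 φ r t₀ t₁ : ℝ} {c w x q y : ℝ → ℝ}
    (hc : IntervalIntegrable c volume t₀ t₁) (hw : IntervalIntegrable w volume t₀ t₁)
    (hx : IntervalIntegrable x volume t₀ t₁)
    (hx2 : IntervalIntegrable (fun t => x t ^ 2) volume t₀ t₁)
    (hq : ContinuousOn q (uIcc t₀ t₁)) (hy : IntervalIntegrable y volume t₀ t₁) :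
    IntervalIntegrable (fun t => runningReward a 𝔥 𝔭 φ r (c t) (w t) (x t) (q t) (y t))
      volume t₀ t₁ :=
  (hx2.const_mul (-a)).add (((((hc.add (hx.const_mul 𝔥)).sub (hy.const_mul 𝔭)).sub
    ((hx.sub hw).const_mul (2 * φ))).sub (hq.intervalIntegrable.const_mul r)).continuousOn_mul hq)

section Inventory

variable {Q : (ℝ → ℝ) → ℝ → ℝ} {q₀ : ℝ} {w ν ζ : ℝ → ℝ}

theorem continuousOn_inventory {T : ℝ}
    (hQ : ∀ ν t, Q ν t = q₀ + ∫ s in (0:ℝ)..t, (ν s - w s))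
    (hν : IntervalIntegrable ν volume 0 T) (hw : IntervalIntegrable w volume 0 T) :
    ContinuousOn (Q ν) (uIcc 0 T) := by
  rw [show Q ν = fun t => q₀ + ∫ s in (0:ℝ)..t, (ν s - w s) from funext (hQ ν)]
  exact continuousOn_const.add (continuousOn_primitive_interval' (hν.sub hw) left_mem_uIcc)

theorem inventory_convexComb {t : ℝ}
    (hQ : ∀ ν t, Q ν t = q₀ + ∫ s in (0:ℝ)..t, (ν s - w s))
    (hν : IntervalIntegrable ν volume 0 t) (hζ : IntervalIntegrable ζ volume 0 t)
    (hw : IntervalIntegrable w volume 0 t) (ρ : ℝ) :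
    Q (fun s => ρ * ν s + (1 - ρ) * ζ s) t = ρ * Q ν t + (1 - ρ) * Q ζ t := by
  have h : ∫ s in (0:ℝ)..t, (ρ * ν s + (1 - ρ) * ζ s - w s)
      = ∫ s in (0:ℝ)..t, (ρ * (ν s - w s) + (1 - ρ) * (ζ s - w s)) := by
    congr 1 with s
    ring
  rw [hQ, hQ, hQ, h, integral_convexComb (hν.sub hw) (hζ.sub hw)]
  ring

theorem inventory_sub {t : ℝ}
    (hQ : ∀ ν t, Q ν t = q₀ + ∫ s in (0:ℝ)..t, (ν s - w s))
    (hν : IntervalIntegrable ν volume 0 t) (hζ : IntervalIntegrable ζ volume 0 t)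
    (hw : IntervalIntegrable w volume 0 t) :
    Q ν t - Q ζ t = ∫ s in (0:ℝ)..t, (ν s - ζ s) := by
  rw [hQ, hQ, add_sub_add_left_eq_sub, ← integral_sub (hν.sub hw) (hζ.sub hw)]
  congr 1 with s
  ring

end Inventory

section Impact

variable {Y : (ℝ → ℝ) → ℝ → ℝ} {𝔥 𝔭 Y₀ : ℝ} {ν ζ : ℝ → ℝ}

theorem continuousOn_impact {T : ℝ}
    (hY : ∀ ν t, Y ν t = exp (-𝔭 * t) * Y₀ + 𝔥 * discountedPrimitive 𝔭 ν t)
    (hν : IntervalIntegrable ν volume 0 T) :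
    ContinuousOn (Y ν) (uIcc 0 T) := by
  rw [show Y ν = fun t => exp (-𝔭 * t) * Y₀ + 𝔥 * discountedPrimitive 𝔭 ν t from funext (hY ν)]
  exact (Continuous.continuousOn (by fun_prop)).add
    (continuousOn_const.mul (continuousOn_discountedPrimitive hν))

theorem impact_convexComb {t : ℝ}
    (hY : ∀ ν t, Y ν t = exp (-𝔭 * t) * Y₀ + 𝔥 * discountedPrimitive 𝔭 ν t)
    (hν : IntervalIntegrable ν volume 0 t) (hζ : IntervalIntegrable ζ volume 0 t) (ρ : ℝ) :
    Y (fun s => ρ * ν s + (1 - ρ) * ζ s) t = ρ * Y ν t + (1 - ρ) * Y ζ t := by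
  rw [hY, hY, hY, discountedPrimitive_convexComb hν hζ]
  ring

theorem impact_sub {t : ℝ}
    (hY : ∀ ν t, Y ν t = exp (-𝔭 * t) * Y₀ + 𝔥 * discountedPrimitive 𝔭 ν t)
    (hν : IntervalIntegrable ν volume 0 t) (hζ : IntervalIntegrable ζ volume 0 t) :
    Y ν t - Y ζ t = 𝔥 * discountedPrimitive 𝔭 (fun s => ν s - ζ s) t := by
  rw [hY, hY, ← discountedPrimitive_sub hν hζ]
  ring

end Impact

theorem broker_concavity_defect_eq {T a 𝔥 𝔭 φ r q₀ Y₀ ρ : ℝ} {w c ν ζ : ℝ → ℝ}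
    {Q Y : (ℝ → ℝ) → ℝ → ℝ} {J : (ℝ → ℝ) → ℝ}
    (hw : IntervalIntegrable w volume 0 T) (hc : IntervalIntegrable c volume 0 T)
    (hQ : ∀ ν t, Q ν t = q₀ + ∫ s in (0:ℝ)..t, (ν s - w s))
    (hY : ∀ ν t, Y ν t = exp (-𝔭 * t) * Y₀ + 𝔥 * discountedPrimitive 𝔭 ν t)
    (hJ : ∀ ν, J ν = ∫ t in (0:ℝ)..T,
      runningReward a 𝔥 𝔭 φ r (c t) (w t) (ν t) (Q ν t) (Y ν t))
    (hν : IntervalIntegrable ν volume 0 T)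
    (hν2 : IntervalIntegrable (fun t => ν t ^ 2) volume 0 T)
    (hζ : IntervalIntegrable ζ volume 0 T)
    (hζ2 : IntervalIntegrable (fun t => ζ t ^ 2) volume 0 T) :
    J (fun t => ρ * ν t + (1 - ρ) * ζ t) - (ρ * J ν + (1 - ρ) * J ζ)
      = ρ * (1 - ρ) * ∫ t in (0:ℝ)..T,
          concavityDefect a (2 * φ - 𝔥) (𝔭 * 𝔥) 𝔭 r (fun s => ν s - ζ s) t := by
  have hμ : IntervalIntegrable (fun t => ρ * ν t + (1 - ρ) * ζ t) volume 0 T :=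
    (hν.const_mul ρ).add (hζ.const_mul _)
  have hμ2 := hμ.memLp_two_iff_sq.1
    (((hν.memLp_two_iff_sq.2 hν2).const_mul ρ).add
      ((hζ.memLp_two_iff_sq.2 hζ2).const_mul (1 - ρ)))
  have hL : ∀ g, IntervalIntegrable g volume 0 T →
      IntervalIntegrable (fun t => g t ^ 2) volume 0 T →
      IntervalIntegrable (fun t => runningReward a 𝔥 𝔭 φ r (c t) (w t) (g t) (Q g t) (Y g t))
        volume 0 T := fun g hg hg2 =>
    intervalIntegrable_runningReward hc hw hg hg2 (continuousOn_inventory hQ hg hw)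
      (continuousOn_impact hY hg).intervalIntegrable
  rw [hJ, hJ, hJ, ← integral_convexComb (hL ν hν hν2) (hL ζ hζ hζ2),
    ← integral_sub (hL _ hμ hμ2) ((hL ν hν hν2).const_mul ρ |>.add ((hL ζ hζ hζ2).const_mul _)),
    ← intervalIntegral.integral_const_mul]
  refine integral_congr fun t ht => ?_
  have hmono : ∀ {g : ℝ → ℝ}, IntervalIntegrable g volume 0 T → IntervalIntegrable g volume 0 t :=
    fun hg => hg.mono_set (uIcc_subset_uIcc left_mem_uIcc ht)
  rw [inventory_convexComb hQ (hmono hν) (hmono hζ) (hmono hw),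
    impact_convexComb hY (hmono hν) (hmono hζ), runningReward_convexComb_sub,
    inventory_sub hQ (hmono hν) (hmono hζ) (hmono hw), impact_sub hY (hmono hν) (hmono hζ),
    concavityDefect]
  ring

theorem broker_functional_strictly_concave_general
    (T : ℝ) (hT : 0 < T) (a 𝔥 𝔭 φ r q₀ Y₀ : ℝ)
    (h𝔥 : 0 ≤ 𝔥) (h𝔭 : 0 ≤ 𝔭) (ha : 𝔭 * 𝔥 * T < a) (hφ : 0 ≤ 2 * φ - 𝔥)
    (hr : 0 ≤ r)
    (w c : ℝ → ℝ)
    (hw : IntervalIntegrable w volume 0 T)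
    (hc : IntervalIntegrable c volume 0 T)
    (Q : (ℝ → ℝ) → ℝ → ℝ)
    (hQ : ∀ ν t, Q ν t = q₀ + ∫ s in (0:ℝ)..t, (ν s - w s))
    (Y : (ℝ → ℝ) → ℝ → ℝ)
    (hY : ∀ ν t, Y ν t =
      Real.exp (-𝔭 * t) * Y₀ + 𝔥 * ∫ s in (0:ℝ)..t, Real.exp (-𝔭 * (t - s)) * ν s)
    (J : (ℝ → ℝ) → ℝ)
    (hJ : ∀ ν : ℝ → ℝ, J ν =
      ∫ t in (0:ℝ)..T,
        (-a * (ν t) ^ 2 + Q ν t *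
          (c t + 𝔥 * ν t - 𝔭 * Y ν t - 2 * φ * (ν t - w t) - r * Q ν t)))
    (ν ζ : ℝ → ℝ)
    (hν : IntervalIntegrable ν volume 0 T)
    (hν2 : IntervalIntegrable (fun t => (ν t) ^ 2) volume 0 T)
    (hζ : IntervalIntegrable ζ volume 0 T)
    (hζ2 : IntervalIntegrable (fun t => (ζ t) ^ 2) volume 0 T)
    (hne : 0 < volume {t ∈ Set.Icc (0 : ℝ) T | ν t ≠ ζ t})
    (ρ : ℝ) (hρ : ρ ∈ Set.Ioo (0 : ℝ) 1) :
    J (fun t => ρ * ν t + (1 - ρ) * ζ t) > ρ * J ν + (1 - ρ) * J ζ := by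
  have hδ : IntervalIntegrable (fun t => ν t - ζ t) volume 0 T := hν.sub hζ
  have hδ2 := hδ.memLp_two_iff_sq.1
    ((hν.memLp_two_iff_sq.2 hν2).sub (hζ.memLp_two_iff_sq.2 hζ2))
  have ha₀ : 0 < a := lt_of_le_of_lt (by positivity) ha
  rw [gt_iff_lt, ← sub_pos, broker_concavity_defect_eq hw hc hQ hY hJ hν hν2 hζ hζ2]
  exact mul_pos (mul_pos hρ.1 (sub_pos.2 hρ.2)) (integral_concavityDefect_pos hT.le ha₀ hφ
    (mul_nonneg h𝔭 h𝔥) h𝔭 hr hδ hδ2 (integral_sq_sub_pos hδ2 hne))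

/-- strict concavity of the broker's deterministic functional. -/
theorem broker_functional_strictly_concave
    (T : ℝ) (hT : 0 < T) (a 𝔥 𝔭 φ r q₀ Y₀ : ℝ)
    (h𝔥 : 0 ≤ 𝔥) (h𝔭 : 0 ≤ 𝔭) (ha : 𝔭 * 𝔥 * T < a) (hφ : 0 ≤ 2 * φ - 𝔥)
    (hr : 0 ≤ r)
    (w c : ℝ → ℝ)
    (hw : IntervalIntegrable w volume 0 T)
    (hw2 : IntervalIntegrable (fun t => (w t) ^ 2) volume 0 T)
    (hc : IntervalIntegrable c volume 0 T)
    (Q : (ℝ → ℝ) → ℝ → ℝ)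
    (hQ : ∀ ν t, Q ν t = q₀ + ∫ s in (0:ℝ)..t, (ν s - w s))
    (Y : (ℝ → ℝ) → ℝ → ℝ)
    (hY : ∀ ν t, Y ν t =
      Real.exp (-𝔭 * t) * Y₀ + 𝔥 * ∫ s in (0:ℝ)..t, Real.exp (-𝔭 * (t - s)) * ν s)
    (J : (ℝ → ℝ) → ℝ)
    (hJ : ∀ ν : ℝ → ℝ, J ν =
      ∫ t in (0:ℝ)..T,
        (-a * (ν t) ^ 2 + Q ν t *
          (c t + 𝔥 * ν t - 𝔭 * Y ν t - 2 * φ * (ν t - w t) - r * Q ν t)))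
    (ν ζ : ℝ → ℝ)
    (hν : IntervalIntegrable ν volume 0 T)
    (hν2 : IntervalIntegrable (fun t => (ν t) ^ 2) volume 0 T)
    (hζ : IntervalIntegrable ζ volume 0 T)
    (hζ2 : IntervalIntegrable (fun t => (ζ t) ^ 2) volume 0 T)
    (hne : 0 < volume {t ∈ Set.Icc (0 : ℝ) T | ν t ≠ ζ t})
    (ρ : ℝ) (hρ : ρ ∈ Set.Ioo (0 : ℝ) 1) :
    J (fun t => ρ * ν t + (1 - ρ) * ζ t) > ρ * J ν + (1 - ρ) * J ζ :=
  broker_functional_strictly_concave_general T hT a 𝔥 𝔭 φ r q₀ Y₀ h𝔥 h𝔭 ha hφ hr w c hw hc Q hQ Y hY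
    J hJ ν ζ hν hν2 hζ hζ2 hne ρ hρ
end

section
/- With J as in the informed trader's deterministic functional, the Gâteaux derivative of J at η in direction 𝔫 ∈ L²([0,T]) exists and equals ∫₀ᵀ 𝔫_t [−2b η_t − 2ψ Q^η_t + ∫ₜᵀ (c_u − 2ψ η_u − 2r Q^η_u) du] dt. -/
open MeasureTheory intervalIntegral Filter Topology Set

/-!
Since `J` is quadratic, `J (η + ε 𝔫) - J η = ε A + ε² B` exactly, where `A` is the first
variation `∫ 𝔫_t (-2b η_t - 2ψ Q^η_t) + (∫₀ᵗ 𝔫) F_t dt` with `F = c - 2ψ η - 2r Q^η`; the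
difference quotient is then `A + ε B → A`. The term `∫ (∫₀ᵗ 𝔫) F_t dt` is moved onto `𝔫` by
integrating by parts the absolutely continuous primitives `∫₀ᵗ 𝔫` and `∫ₜᵀ F`, which is the
Fubini step of the paper.
-/

theorem IntervalIntegrable.mul_of_sq {μ : Measure ℝ} {a b : ℝ} {f g : ℝ → ℝ}
    (hf : IntervalIntegrable f μ a b) (hf2 : IntervalIntegrable (fun t => f t ^ 2) μ a b)
    (hg : IntervalIntegrable g μ a b) (hg2 : IntervalIntegrable (fun t => g t ^ 2) μ a b) :
    IntervalIntegrable (fun t => f t * g t) μ a b := by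
  rw [intervalIntegrable_iff] at *
  exact ((memLp_two_iff_integrable_sq hf.aestronglyMeasurable).2 hf2).integrable_mul
    ((memLp_two_iff_integrable_sq hg.aestronglyMeasurable).2 hg2)

theorem integral_primitive_mul_eq {a b : ℝ} {f g : ℝ → ℝ}
    (hf : IntervalIntegrable f volume a b) (hg : IntervalIntegrable g volume a b) :
    ∫ t in a..b, (∫ u in a..t, f u) * g t = ∫ u in a..b, f u * ∫ t in u..b, g t := by
  have hF := hf.absolutelyContinuousOnInterval_intervalIntegral left_mem_uIcc
  have hG := hg.absolutelyContinuousOnInterval_intervalIntegral right_mem_uIcc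
  have hparts := hF.integral_mul_deriv_eq_deriv_mul hG
  have hderiv_f : ∫ t in a..b, deriv (fun x ↦ ∫ v in a..x, f v) t * (∫ v in b..t, g v) =
      ∫ t in a..b, f t * (∫ v in b..t, g v) := by
    refine integral_congr_ae ?_
    filter_upwards [hf.ae_hasDerivAt_integral] with t ht htab
    rw [(ht (uIoc_subset_uIcc htab) a left_mem_uIcc).deriv]
  have hderiv_g : ∫ t in a..b, (∫ u in a..t, f u) * deriv (fun x ↦ ∫ v in b..x, g v) t =
      ∫ t in a..b, (∫ u in a..t, f u) * g t := by
    refine integral_congr_ae ?_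
    filter_upwards [hg.ae_hasDerivAt_integral] with t ht htab
    rw [(ht (uIoc_subset_uIcc htab) b right_mem_uIcc).deriv]
  rw [← hderiv_g, hparts, hderiv_f]
  simp only [integral_same, mul_zero, zero_mul, sub_zero, zero_sub, ← intervalIntegral.integral_neg]
  refine integral_congr fun u _ => ?_
  rw [integral_symm u b]
  ring

theorem tendsto_inv_mul_of_eq_mul_add_sq_mul {g : ℝ → ℝ} {A B : ℝ}
    (hg : ∀ ε, g ε = ε * A + ε ^ 2 * B) :
    Tendsto (fun ε => ε⁻¹ * g ε) (𝓝[≠] 0) (𝓝 A) := by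
  have hlin : Tendsto (fun ε : ℝ => A + ε * B) (𝓝[≠] 0) (𝓝 A) := by
    have h : Continuous fun ε : ℝ => A + ε * B := by fun_prop
    simpa using (h.tendsto 0).mono_left nhdsWithin_le_nhds
  refine hlin.congr' ?_
  filter_upwards [self_mem_nhdsWithin] with ε (hε : ε ≠ 0)
  rw [hg]
  field_simp

theorem integral_mul_add_primitive_mul_eq {a b : ℝ} {f g h : ℝ → ℝ}
    (hf : IntervalIntegrable f volume a b)
    (hfh : IntervalIntegrable (fun t => f t * h t) volume a b) (hg : IntervalIntegrable g volume a b) :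
    ∫ t in a..b, (f t * h t + (∫ u in a..t, f u) * g t) =
      ∫ t in a..b, f t * (h t + ∫ u in t..b, g u) := by
  have hF := continuousOn_primitive_interval' hf left_mem_uIcc
  have hG :=
    continuousOn_primitive_interval_left ((intervalIntegrable_iff' (by finiteness)).1 hg)
  rw [integral_add hfh (hg.continuousOn_mul hF), integral_primitive_mul_eq hf hg,
    ← integral_add hfh (hf.mul_continuousOn hG)]
  simp only [mul_add]

/-- `x` is the trading speed `η_t`, `q` the inventory `Q^η_t` and `c` the signal `c_t`. -/
def informedLagrangian (b ψ r c x q : ℝ) : ℝ :=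
  -b * x ^ 2 + q * (c - 2 * ψ * x - r * q)

noncomputable def informedObjective (T b ψ r q₀ : ℝ) (c γ : ℝ → ℝ) : ℝ :=
  ∫ t in (0:ℝ)..T, informedLagrangian b ψ r (c t) (γ t) (q₀ + ∫ s in (0:ℝ)..t, γ s)

theorem informedLagrangian_add_mul (b ψ r c x y q p ε : ℝ) :
    informedLagrangian b ψ r c (x + ε * y) (q + ε * p) =
      informedLagrangian b ψ r c x q
        + ε * (y * (-2 * b * x - 2 * ψ * q) + p * (c - 2 * ψ * x - 2 * r * q))
        + ε ^ 2 * informedLagrangian b ψ r 0 y p := by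
  unfold informedLagrangian
  ring

theorem IntervalIntegrable.informedLagrangian {t₀ t₁ b ψ r : ℝ} {c x q : ℝ → ℝ}
    (hc : IntervalIntegrable c volume t₀ t₁) (hx : IntervalIntegrable x volume t₀ t₁)
    (hx2 : IntervalIntegrable (fun t => x t ^ 2) volume t₀ t₁) (hq : ContinuousOn q (uIcc t₀ t₁)) :
    IntervalIntegrable (fun t => informedLagrangian b ψ r (c t) (x t) (q t)) volume t₀ t₁ :=
  (hx2.const_mul (-b)).add
    (((hc.sub (hx.const_mul (2 * ψ))).sub (hq.intervalIntegrable.const_mul r)).continuousOn_mul hq)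

theorem informedObjective_add_mul_sub {T b ψ r q₀ : ℝ} {c η 𝔫 : ℝ → ℝ}
    (hc : IntervalIntegrable c volume 0 T) (hη : IntervalIntegrable η volume 0 T)
    (hη2 : IntervalIntegrable (fun t => η t ^ 2) volume 0 T)
    (h𝔫 : IntervalIntegrable 𝔫 volume 0 T)
    (h𝔫2 : IntervalIntegrable (fun t => 𝔫 t ^ 2) volume 0 T) (ε : ℝ) :
    informedObjective T b ψ r q₀ c (fun t => η t + ε * 𝔫 t) - informedObjective T b ψ r q₀ c η =
      ε * (∫ t in (0:ℝ)..T, 𝔫 t * (-2 * b * η t - 2 * ψ * (q₀ + ∫ s in (0:ℝ)..t, η s)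
          + ∫ u in t..T, (c u - 2 * ψ * η u - 2 * r * (q₀ + ∫ s in (0:ℝ)..u, η s))))
        + ε ^ 2 * ∫ t in (0:ℝ)..T, informedLagrangian b ψ r 0 (𝔫 t) (∫ s in (0:ℝ)..t, 𝔫 s) := by
  have hQ : ContinuousOn (fun t => q₀ + ∫ s in (0:ℝ)..t, η s) (uIcc 0 T) :=
    continuousOn_const.add (continuousOn_primitive_interval' hη left_mem_uIcc)
  have hN : ContinuousOn (fun t => ∫ s in (0:ℝ)..t, 𝔫 s) (uIcc 0 T) :=
    continuousOn_primitive_interval' h𝔫 left_mem_uIcc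
  have hF : IntervalIntegrable
      (fun t => c t - 2 * ψ * η t - 2 * r * (q₀ + ∫ s in (0:ℝ)..t, η s)) volume 0 T :=
    (hc.sub (hη.const_mul _)).sub (hQ.intervalIntegrable.const_mul _)
  have h𝔫h : IntervalIntegrable
      (fun t => 𝔫 t * (-2 * b * η t - 2 * ψ * (q₀ + ∫ s in (0:ℝ)..t, η s))) volume 0 T :=
    (((h𝔫.mul_of_sq h𝔫2 hη hη2).const_mul (-2 * b)).sub
      ((h𝔫.mul_continuousOn hQ).const_mul (2 * ψ))).congr fun t _ => by ring
  have hprimitive : ∀ t ∈ uIcc 0 T,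
      q₀ + ∫ s in (0:ℝ)..t, (η s + ε * 𝔫 s) =
        (q₀ + ∫ s in (0:ℝ)..t, η s) + ε * ∫ s in (0:ℝ)..t, 𝔫 s := by
    intro t ht
    have hsub := uIcc_subset_uIcc left_mem_uIcc ht
    rw [integral_add (hη.mono_set hsub) ((h𝔫.mono_set hsub).const_mul ε),
      intervalIntegral.integral_const_mul, add_assoc]
  have hexpand : informedObjective T b ψ r q₀ c (fun t => η t + ε * 𝔫 t) =
      ∫ t in (0:ℝ)..T, (informedLagrangian b ψ r (c t) (η t) (q₀ + ∫ s in (0:ℝ)..t, η s)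
        + ε * (𝔫 t * (-2 * b * η t - 2 * ψ * (q₀ + ∫ s in (0:ℝ)..t, η s))
          + (∫ s in (0:ℝ)..t, 𝔫 s) * (c t - 2 * ψ * η t - 2 * r * (q₀ + ∫ s in (0:ℝ)..t, η s)))
        + ε ^ 2 * informedLagrangian b ψ r 0 (𝔫 t) (∫ s in (0:ℝ)..t, 𝔫 s)) :=
    integral_congr fun t ht => by
      simp only [hprimitive t ht, informedLagrangian_add_mul]
  have hL := IntervalIntegrable.informedLagrangian (b := b) (ψ := ψ) (r := r) hc hη hη2 hQ
  have hL₀ := IntervalIntegrable.informedLagrangian (b := b) (ψ := ψ) (r := r)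
    (intervalIntegrable_const (c := 0)) h𝔫 h𝔫2 hN
  have hfirst := h𝔫h.add (hF.continuousOn_mul hN)
  rw [hexpand, integral_add (hL.add (hfirst.const_mul ε)) (hL₀.const_mul _),
    integral_add hL (hfirst.const_mul ε), intervalIntegral.integral_const_mul,
    intervalIntegral.integral_const_mul,
    integral_mul_add_primitive_mul_eq h𝔫 h𝔫h hF]
  unfold informedObjective
  ring

theorem informed_gateaux_derivative_general
    (T : ℝ) (b ψ r q₀ : ℝ)
    (c : ℝ → ℝ)
    (hc1 : IntervalIntegrable c volume 0 T)
    (J : (ℝ → ℝ) → ℝ)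
    (hJ : ∀ γ : ℝ → ℝ, J γ =
      ∫ t in (0:ℝ)..T,
        (-b * (γ t) ^ 2 + (q₀ + ∫ s in (0:ℝ)..t, γ s)
          * (c t - 2 * ψ * γ t - r * (q₀ + ∫ s in (0:ℝ)..t, γ s))))
    (η 𝔫 : ℝ → ℝ)
    (hη : IntervalIntegrable η volume 0 T)
    (hη2 : IntervalIntegrable (fun t => (η t) ^ 2) volume 0 T)
    (h𝔫 : IntervalIntegrable 𝔫 volume 0 T)
    (h𝔫2 : IntervalIntegrable (fun t => (𝔫 t) ^ 2) volume 0 T) :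
    Tendsto (fun ε : ℝ => ε⁻¹ * (J (fun t => η t + ε * 𝔫 t) - J η))
      (𝓝[≠] (0 : ℝ))
      (𝓝 (∫ t in (0:ℝ)..T,
        𝔫 t * (-2 * b * η t - 2 * ψ * (q₀ + ∫ s in (0:ℝ)..t, η s)
          + ∫ u in t..T,
              (c u - 2 * ψ * η u - 2 * r * (q₀ + ∫ s in (0:ℝ)..u, η s))))) := by
  obtain rfl : J = informedObjective T b ψ r q₀ c := funext hJ
  exact tendsto_inv_mul_of_eq_mul_add_sq_mul (informedObjective_add_mul_sub hc1 hη hη2 h𝔫 h𝔫2)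

/-- the Gâteaux derivative of the informed trader's deterministic
functional at `η` in direction `𝔫`. -/
theorem informed_gateaux_derivative
    (T : ℝ) (hT : 0 < T) (b ψ r q₀ : ℝ) (hb : 0 < b) (hψ : 0 ≤ ψ) (hr : 0 ≤ r)
    (c : ℝ → ℝ) (hc : IntervalIntegrable (fun t => (c t) ^ 2) volume 0 T)
    (hc1 : IntervalIntegrable c volume 0 T)
    (J : (ℝ → ℝ) → ℝ)
    (hJ : ∀ γ : ℝ → ℝ, J γ =
      ∫ t in (0:ℝ)..T,
        (-b * (γ t) ^ 2 + (q₀ + ∫ s in (0:ℝ)..t, γ s)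
          * (c t - 2 * ψ * γ t - r * (q₀ + ∫ s in (0:ℝ)..t, γ s))))
    (η 𝔫 : ℝ → ℝ)
    (hη : IntervalIntegrable η volume 0 T)
    (hη2 : IntervalIntegrable (fun t => (η t) ^ 2) volume 0 T)
    (h𝔫 : IntervalIntegrable 𝔫 volume 0 T)
    (h𝔫2 : IntervalIntegrable (fun t => (𝔫 t) ^ 2) volume 0 T) :
    Tendsto (fun ε : ℝ => ε⁻¹ * (J (fun t => η t + ε * 𝔫 t) - J η))
      (𝓝[≠] (0 : ℝ))
      (𝓝 (∫ t in (0:ℝ)..T,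
        𝔫 t * (-2 * b * η t - 2 * ψ * (q₀ + ∫ s in (0:ℝ)..t, η s)
          + ∫ u in t..T,
              (c u - 2 * ψ * η u - 2 * r * (q₀ + ∫ s in (0:ℝ)..u, η s))))) :=
  informed_gateaux_derivative_general T b ψ r q₀ c hc1 J hJ η 𝔫 hη hη2 h𝔫 h𝔫2
end
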